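/- For all integers d₁, d₂ with 2 ≤ d₁ < d₂ such that the average degree d = 2d₁d₂/(d₁+d₂) satisfies d ≥ 10, one has μ(d₁,d₂) < d − 2·sqrt(d−1). -/
import Mathlib


/-- The paper's asymptotic algebraic connectivity of a random `(d₁,d₂)` semi-regular
bipartite graph. -/
noncomputable def muRSRB (d₁ d₂ : ℝ) : ℝ :=
  (d₁ + d₂) / 2 -
    Real.sqrt (((d₂ - d₁) / 2) ^ 2 +
      Real.sqrt (d₁ + d₂ - 2 + Real.sqrt ((d₁ + d₂ - 2) ^ 2 - (d₂ - d₁) ^ 2)) ^ 2)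

set_option maxHeartbeats 800000 in
/-- For integers `2 ≤ d₁ < d₂` whose (not necessarily integer) average degree
`d = 2d₁d₂/(d₁+d₂)` is at least `10`, one has `μ(d₁,d₂) < d − 2·sqrt(d−1)`. -/
theorem regular_beats_rsrb_avg_degree_ten (d₁ d₂ : ℤ) (hd₁ : 2 ≤ d₁) (hd₁₂ : d₁ < d₂)
    (d : ℝ) (hd : d = 2 * (d₁ : ℝ) * (d₂ : ℝ) / ((d₁ : ℝ) + (d₂ : ℝ))) (hd10 : 10 ≤ d) :
    muRSRB (d₁ : ℝ) (d₂ : ℝ) < d - 2 * Real.sqrt (d - 1) := by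
  set x : ℝ := (d₁ : ℝ) with hxdef
  set y : ℝ := (d₂ : ℝ) with hydef
  have hx : (2:ℝ) ≤ x := by rw [hxdef]; exact_mod_cast hd₁
  have hxy : x < y := by rw [hxdef, hydef]; exact_mod_cast hd₁₂
  have hy : (2:ℝ) ≤ y := le_of_lt (lt_of_le_of_lt hx hxy)
  have hxypos : (0:ℝ) < x + y := by linarith
  -- the prod of (x-1)(y-1)
  have hprod : (0:ℝ) ≤ (x - 1) * (y - 1) := by nlinarith
  -- inner sqrt simplification
  have hinner : Real.sqrt ((x + y - 2) ^ 2 - (y - x) ^ 2)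
      = 2 * Real.sqrt ((x - 1) * (y - 1)) := by
    have h4 : (x + y - 2) ^ 2 - (y - x) ^ 2 = 2 ^ 2 * ((x - 1) * (y - 1)) := by ring
    rw [h4, Real.sqrt_mul (by norm_num) _, Real.sqrt_sq (by norm_num : (0:ℝ) ≤ 2)]
  set w : ℝ := Real.sqrt ((x - 1) * (y - 1)) with hwdef
  have hwnn : 0 ≤ w := Real.sqrt_nonneg _
  have hw2 : w ^ 2 = (x - 1) * (y - 1) := Real.sq_sqrt hprod
  have hmid : 0 ≤ x + y - 2 + 2 * w := by linarith
  have hsq : Real.sqrt (x + y - 2 + Real.sqrt ((x + y - 2) ^ 2 - (y - x) ^ 2)) ^ 2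
      = x + y - 2 + 2 * w := by
    rw [hinner]; exact Real.sq_sqrt hmid
  -- abbreviations
  set u : ℝ := (y - x) ^ 2 / (2 * (x + y)) with hudef
  have hu : 0 < u := div_pos (pow_pos (by linarith) 2) (by linarith)
  have hdu : d = (x + y) / 2 - u := by
    rw [hd, hudef]; field_simp; ring
  set v : ℝ := Real.sqrt (d - 1) with hvdef
  have hv2 : v ^ 2 = d - 1 := Real.sq_sqrt (by linarith)
  have hv3 : (3:ℝ) ≤ v := by
    rw [hvdef, show (3:ℝ) = Real.sqrt (3 ^ 2) from (Real.sqrt_sq (by norm_num)).symm]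
    apply Real.sqrt_le_sqrt; norm_num; linarith
  -- m = u + v^2 + 1
  have hm : (x + y) / 2 = u + v ^ 2 + 1 := by rw [hv2]; linarith [hdu]
  -- (x-1)(y-1) = v^4 + u (v^2 - 1)
  have ha2 : ((y - x) / 2) ^ 2 = ((x + y) / 2) * u := by
    rw [hudef]; field_simp
  have hkey : (x - 1) * (y - 1) = v ^ 2 * v ^ 2 + u * (v ^ 2 - 1) := by
    linear_combination (v ^ 2 + (x + y) / 2 - 1) * hm - ha2
  -- w > v^2
  have hwv : v ^ 2 < w := by
    have : (v ^ 2) ^ 2 < (x - 1) * (y - 1) := by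
      rw [hkey]
      have h1 : 0 < v ^ 2 - 1 := by nlinarith
      nlinarith [mul_pos hu h1]
    calc v ^ 2 = Real.sqrt ((v ^ 2) ^ 2) := (Real.sqrt_sq (by positivity)).symm
    _ < w := Real.sqrt_lt_sqrt (by positivity) this
  -- main inequality
  unfold muRSRB
  rw [hsq]
  have hP : 0 ≤ u * ((v - 1) * (v - 3)) :=
    mul_nonneg hu.le (mul_nonneg (by linarith) (by linarith))
  have hxy2 : x + y = 2 * (u + v ^ 2 + 1) := by linarith [hm]
  have hgoal : u + 2 * v < Real.sqrt (((y - x) / 2) ^ 2 + (x + y - 2 + 2 * w)) := by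
    rw [Real.lt_sqrt (by positivity), ha2, hxy2]
    nlinarith [hP, hwv]
  have : d - 2 * Real.sqrt (d - 1) = (x + y) / 2 - (u + 2 * v) := by
    rw [← hvdef, hdu]; ring
  rw [this]
  linarith [hgoal]
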